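/- arXiv:math/9907209 — 3 statements merged into one kernel-verified Lean document; each statement's English description precedes it below -/
import Mathlib

section
/- Let G be a complete normed abelian group such that every continuous path γ : [0,1] → G of finite length is constant. Then for every N ≥ 1, every compactly supported G-valued Borel measure on ℝ^N with finite total variation is purely atomic, i.e., there is a countable set S ⊆ ℝ^N such that ν(B \ S) = 0 for every Borel set B. (This is the implication (2) ⟹ (1) of Theorem 7.1 in the case k = 0, expressed in measure language via Theorem 2.2; it is the 0-dimensional rectifiability theorem for coefficient groups with no nonconstant rectifiable paths.) -/
open MeasureTheory Set

/-- A `G`-valued vector measure has finite total variation: there is `C < ∞` such that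
`∑ᵢ ‖ν(Sᵢ)‖ ≤ C` for every countable family of pairwise disjoint Borel sets. -/
def HasFiniteTotalVariation {X : Type*} [MeasurableSpace X] {G : Type*} [NormedAddCommGroup G]
    (ν : VectorMeasure X G) : Prop :=
  ∃ C : ℝ, ∀ S : ℕ → Set X, (∀ i, MeasurableSet (S i)) →
    Pairwise (Function.onFun Disjoint S) →
    ∀ n : ℕ, ∑ i ∈ Finset.range n, ‖ν (S i)‖ ≤ C

/-- `ν` is compactly supported: there is a compact `K` with `ν B = 0` for every
Borel `B` disjoint from `K`. -/
def CompactlySupported {X : Type*} [MeasurableSpace X] [TopologicalSpace X]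
    {G : Type*} [NormedAddCommGroup G] (ν : VectorMeasure X G) : Prop :=
  ∃ K : Set X, IsCompact K ∧ ∀ B : Set X, MeasurableSet B → Disjoint B K → ν B = 0

/-- `ν` is purely atomic: there is a countable set `S` with `ν (B \ S) = 0` for every
Borel `B`. -/
def PurelyAtomic {X : Type*} [MeasurableSpace X] {G : Type*} [NormedAddCommGroup G]
    (ν : VectorMeasure X G) : Prop :=
  ∃ S : Set X, S.Countable ∧ ∀ B : Set X, MeasurableSet B → ν (B \ S) = 0

/-- `γ` has finite length on `[a, b]`: the sums `∑ ‖γ(tᵢ₊₁) - γ(tᵢ)‖` over all partitions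
`a = t₀ ≤ t₁ ≤ ⋯ ≤ t_m = b` are bounded. -/
def FiniteLengthOn {G : Type*} [NormedAddCommGroup G] (γ : ℝ → G) (a b : ℝ) : Prop :=
  ∃ C : ℝ, ∀ (m : ℕ) (t : ℕ → ℝ), Monotone t → t 0 = a → t m = b →
    ∑ i ∈ Finset.range m, ‖γ (t (i + 1)) - γ (t i)‖ ≤ C

/-!
Let `|ν|` be the total variation measure of `ν`, finite by hypothesis, and `T` its countable set
of atoms. For a Borel set `B`, the restriction `ν'` of `ν` to `B \ T` has atomless variation.
Embed `ℝ^N`, a standard Borel space, measurably into a bounded interval `(a, b)` by `g`. The path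
`t ↦ ν'(g⁻¹(-∞, t))` is then continuous, because `|ν'|` has no atoms, and its length is at most
`|ν'|(ℝ^N) < ∞`. Such a path is constant, and its values at `a` and `b` are `0` and `ν(B \ T)`.
-/

def NoNonconstantFiniteLengthPaths (G : Type*) [NormedAddCommGroup G] : Prop :=
  ∀ γ : ℝ → G, ContinuousOn γ (Icc 0 1) → FiniteLengthOn γ 0 1 →
    ∀ s ∈ Icc (0:ℝ) 1, ∀ t ∈ Icc (0:ℝ) 1, γ s = γ t

namespace MeasureTheory.VectorMeasure

open Filter Topology Finset

variable {G : Type*} [NormedAddCommGroup G] {X : Type*} [MeasurableSpace X]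

theorem _root_.HasFiniteTotalVariation.exists_sum_norm_le {ν : VectorMeasure X G}
    (hν : HasFiniteTotalVariation ν) :
    ∃ C : ℝ, ∀ P : Finset (Set X), (∀ p ∈ P, MeasurableSet p) →
      (P : Set (Set X)).PairwiseDisjoint id → ∑ p ∈ P, ‖ν p‖ ≤ C := by
  classical
  obtain ⟨C, hC⟩ := hν
  refine ⟨C, fun P hmeas hdisj => ?_⟩
  let S : ℕ → Set X := fun i => if h : i < #P then P.equivFin.symm ⟨i, h⟩ else ∅
  have hS_meas : ∀ i, MeasurableSet (S i) := by
    intro i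
    by_cases h : i < #P
    · simp only [S, dif_pos h]
      exact hmeas _ (Subtype.prop _)
    · simp [S, dif_neg h]
  have hS_disj : Pairwise (Function.onFun Disjoint S) := by
    intro i j hij
    by_cases hi : i < #P
    · by_cases hj : j < #P
      · simp only [Function.onFun, S, dif_pos hi, dif_pos hj]
        refine hdisj (Subtype.prop _) (Subtype.prop _) fun h => hij ?_
        simpa using P.equivFin.symm.injective (Subtype.ext h)
      · simp [Function.onFun, S, dif_neg hj]
    · simp [Function.onFun, S, dif_neg hi]
  have hS_sum : ∑ i ∈ range #P, ‖ν (S i)‖ = ∑ p ∈ P, ‖ν p‖ := by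
    rw [← Fin.sum_univ_eq_sum_range (fun i => ‖ν (S i)‖), ← P.sum_coe_sort,
      ← P.equivFin.symm.sum_comp]
    refine Finset.sum_congr rfl fun i _ => ?_
    simp [S, dif_pos i.isLt]
  exact hS_sum ▸ hC S hS_meas hS_disj #P

theorem _root_.HasFiniteTotalVariation.isFiniteMeasure_variation {ν : VectorMeasure X G}
    (hν : HasFiniteTotalVariation ν) : IsFiniteMeasure ν.variation := by
  obtain ⟨C, hC⟩ := hν.exists_sum_norm_le
  refine ⟨(le_of_not_gt fun hlt => ?_).trans_lt (ENNReal.ofReal_lt_top (r := C))⟩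
  obtain ⟨P, -, hdisj, hmeas, hsum⟩ := ν.exists_lt_sum_of_lt_variation MeasurableSet.univ hlt
  refine hsum.not_ge ?_
  calc ∑ p ∈ P, ‖ν p‖ₑ = ENNReal.ofReal (∑ p ∈ P, ‖ν p‖) := by
        rw [ENNReal.ofReal_sum_of_nonneg fun _ _ => norm_nonneg _]
        simp only [ofReal_norm]
    _ ≤ ENNReal.ofReal C := ENNReal.ofReal_le_ofReal (hC P hmeas hdisj)

section Real

variable (ρ : VectorMeasure ℝ G) [IsFiniteMeasure ρ.variation]

theorem norm_apply_Iio_sub_apply_Iio_le {s t : ℝ} (hst : s ≤ t) :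
    ‖ρ (Iio t) - ρ (Iio s)‖ ≤ ρ.variation.real (Ico s t) := by
  have hsplit : ρ (Iio t) = ρ (Iio s) + ρ (Ico s t) := by
    rw [← Iio_union_Ico_eq_Iio hst]
    exact ρ.of_union ((Iio_disjoint_Ici le_rfl).mono_right Ico_subset_Ici_self)
      measurableSet_Iio measurableSet_Ico
  rw [hsplit, add_sub_cancel_left]
  exact norm_measure_le_variation

theorem continuous_apply_Iio [NullSingletonClass ρ.variation] : Continuous fun t => ρ (Iio t) := by
  refine continuous_iff_continuousAt.2 fun x => tendsto_iff_norm_sub_tendsto_zero.2 ?_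
  have hbound : ∀ y, ‖ρ (Iio y) - ρ (Iio x)‖ ≤
      ρ.variation.real (Icc (x - |y - x|) (x + |y - x|)) := by
    intro y
    rcases le_total x y with h | h
    · refine (norm_apply_Iio_sub_apply_Iio_le ρ h).trans (measureReal_mono ?_)
      exact Ico_subset_Icc_self.trans (Icc_subset_Icc (by linarith [abs_nonneg (y - x)])
        (by linarith [le_abs_self (y - x)]))
    · rw [norm_sub_rev]
      refine (norm_apply_Iio_sub_apply_Iio_le ρ h).trans (measureReal_mono ?_)
      exact Ico_subset_Icc_self.trans (Icc_subset_Icc (by linarith [neg_abs_le (y - x)])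
        (by linarith [abs_nonneg (y - x)]))
  have hdist : Tendsto (fun y => |y - x|) (𝓝 x) (𝓝 0) := by
    simpa using ((continuous_id.sub (continuous_const (y := x))).abs.tendsto x)
  have hlim := (ENNReal.tendsto_toReal ENNReal.zero_ne_top).comp
    ((tendsto_measure_Icc ρ.variation x).comp hdist)
  exact squeeze_zero (fun _ => norm_nonneg _) hbound hlim

theorem sum_norm_apply_Iio_sub_apply_Iio_le {t : ℕ → ℝ} (ht : Monotone t) (m : ℕ) :
    ∑ i ∈ range m, ‖ρ (Iio (t (i + 1))) - ρ (Iio (t i))‖ ≤ ρ.variation.real univ :=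
  calc ∑ i ∈ range m, ‖ρ (Iio (t (i + 1))) - ρ (Iio (t i))‖
      ≤ ∑ i ∈ range m, ρ.variation.real (Ico (t i) (t (i + 1))) :=
        sum_le_sum fun i _ => norm_apply_Iio_sub_apply_Iio_le ρ (ht i.le_succ)
    _ = ρ.variation.real (⋃ i ∈ range m, Ico (t i) (t (i + 1))) :=
        (measureReal_biUnion_finset (fun i _ j _ hij => ht.pairwise_disjoint_on_Ico_succ hij)
          fun _ _ => measurableSet_Ico).symm
    _ ≤ ρ.variation.real univ := measureReal_mono (subset_univ _)

theorem apply_Iio_eq_apply_Iio (hG : NoNonconstantFiniteLengthPaths G)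
    [NullSingletonClass ρ.variation] (a b : ℝ) : ρ (Iio a) = ρ (Iio b) := by
  wlog hab : a ≤ b generalizing a b
  · exact (this b a (le_of_not_ge hab)).symm
  have hmono : Monotone fun u : ℝ => a + u * (b - a) := fun u v huv => by
    have := mul_le_mul_of_nonneg_right huv (sub_nonneg.2 hab)
    linarith
  let γ : ℝ → G := fun u => ρ (Iio (a + u * (b - a)))
  have hcont : Continuous γ := (continuous_apply_Iio ρ).comp (by fun_prop)
  have hlen : FiniteLengthOn γ 0 1 :=
    ⟨_, fun m t ht _ _ => sum_norm_apply_Iio_sub_apply_Iio_le ρ (hmono.comp ht) m⟩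
  simpa [γ] using hG γ hcont.continuousOn hlen 0 (by simp) 1 (by simp)

end Real

theorem apply_univ_eq_zero_of_measurableEmbedding (hG : NoNonconstantFiniteLengthPaths G)
    (ν : VectorMeasure X G) [IsFiniteMeasure ν.variation] [NullSingletonClass ν.variation]
    {g : X → ℝ} (hg : MeasurableEmbedding g) {a b : ℝ} (hgab : range g ⊆ Ioo a b) :
    ν Set.univ = 0 := by
  have : NullSingletonClass (ν.map g).variation := by
    refine ⟨fun t => ?_⟩
    rw [hg.variation_map, hg.map_apply]
    exact (subsingleton_singleton.preimage hg.injective).measure_zero _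
  have hpre : ∀ c, ν.map g (Iio c) = ν (g ⁻¹' Iio c) := fun c =>
    map_apply ν hg.measurable measurableSet_Iio
  have ha : g ⁻¹' Iio a = ∅ :=
    eq_empty_of_forall_notMem fun x hx => (hgab (mem_range_self x)).1.not_gt hx
  have hb : g ⁻¹' Iio b = univ :=
    eq_univ_of_forall fun x => (hgab (mem_range_self x)).2
  simpa [hpre, ha, hb] using (apply_Iio_eq_apply_Iio (ν.map g) hG a b).symm

theorem purelyAtomic_of_measurableEmbedding [MeasurableSingletonClass X]
    (hG : NoNonconstantFiniteLengthPaths G) (ν : VectorMeasure X G) [IsFiniteMeasure ν.variation]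
    {g : X → ℝ} (hg : MeasurableEmbedding g) {a b : ℝ} (hgab : range g ⊆ Ioo a b) :
    PurelyAtomic ν := by
  set T := {x | 0 < ν.variation {x}}
  have hT : T.Countable := by
    simpa using Measure.countable_meas_level_set_pos (μ := ν.variation) measurable_id
  refine ⟨T, hT, fun B hB => ?_⟩
  have hBT : MeasurableSet (B \ T) := hB.diff hT.measurableSet
  have : NullSingletonClass (ν.restrict (B \ T)).variation := by
    refine ⟨fun x => ?_⟩
    rw [variation_restrict hBT, Measure.restrict_apply (measurableSet_singleton x)]
    by_cases hx : x ∈ T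
    · simp [hx]
    · exact measure_mono_null inter_subset_left (not_lt.1 hx |>.antisymm bot_le)
  simpa using apply_univ_eq_zero_of_measurableEmbedding hG (ν.restrict (B \ T)) hg hgab

end MeasureTheory.VectorMeasure

theorem exists_measurableEmbedding_real_range_subset_Ioo (X : Type*) [MeasurableSpace X]
    [StandardBorelSpace X] :
    ∃ g : X → ℝ, MeasurableEmbedding g ∧ range g ⊆ Ioo (-(Real.pi / 2)) (Real.pi / 2) :=
  ⟨Real.arctan ∘ embeddingReal X,
    (Real.continuous_arctan.measurableEmbedding Real.arctan_injective).comp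
      (measurableEmbedding_embeddingReal X),
    (range_comp_subset_range _ _).trans Real.range_arctan.le⟩

theorem purelyAtomic_of_no_finite_length_paths_general
    {G : Type*} [NormedAddCommGroup G]
    (hG : ∀ γ : ℝ → G, ContinuousOn γ (Icc 0 1) → FiniteLengthOn γ 0 1 →
        ∀ s ∈ Icc (0:ℝ) 1, ∀ t ∈ Icc (0:ℝ) 1, γ s = γ t) :
    ∀ N : ℕ, 1 ≤ N → ∀ ν : VectorMeasure (EuclideanSpace ℝ (Fin N)) G,
      CompactlySupported ν → HasFiniteTotalVariation ν → PurelyAtomic ν := by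
  intro N _ ν _ hν
  have := hν.isFiniteMeasure_variation
  obtain ⟨g, hg, hgab⟩ :=
    exists_measurableEmbedding_real_range_subset_Ioo (EuclideanSpace ℝ (Fin N))
  exact VectorMeasure.purelyAtomic_of_measurableEmbedding hG ν hg hgab

/-- The implication (2) ⟹ (1) of Theorem 7.1 in the case `k = 0`: if every continuous
path of finite length in `G` is constant, then every compactly supported `G`-valued
Borel measure on `ℝ^N` (`N ≥ 1`) of finite total variation is purely atomic. -/
theorem purelyAtomic_of_no_finite_length_paths
    {G : Type*} [NormedAddCommGroup G] [CompleteSpace G]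
    (hG : ∀ γ : ℝ → G, ContinuousOn γ (Icc 0 1) → FiniteLengthOn γ 0 1 →
        ∀ s ∈ Icc (0:ℝ) 1, ∀ t ∈ Icc (0:ℝ) 1, γ s = γ t) :
    ∀ N : ℕ, 1 ≤ N → ∀ ν : VectorMeasure (EuclideanSpace ℝ (Fin N)) G,
      CompactlySupported ν → HasFiniteTotalVariation ν → PurelyAtomic ν :=
  purelyAtomic_of_no_finite_length_paths_general hG
end

section
/- Let G be a complete normed abelian group, let ν be a G-valued Borel measure on ℝ^N, let μ be a finite Borel measure on ℝ^N such that ‖ν(B)‖ ≤ μ(B) for every Borel set B, and let L : ℝ^N → ℝ be a linear map such that μ(L⁻¹{s}) = 0 for every s ∈ ℝ. Define γ : ℝ → G by γ(t) = ν(L⁻¹((−∞, t])). Then: (i) γ is continuous; (ii) γ has length at most μ(ℝ^N), i.e., ∑_{i=1}^m ‖γ(tᵢ) − γ(tᵢ₋₁)‖ ≤ μ(ℝ^N) for every finite sequence t₀ ≤ t₁ ≤ … ≤ t_m of reals; (iii) γ(t) → 0 as t → −∞; and (iv) γ(t) → ν(ℝ^N) as t → +∞. In particular, if ν(ℝ^N)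 ≠ 0 then γ is a nonconstant continuous path of finite length in G. (This is the path construction in the proof of the implication (2) ⟹ (1) of Theorem 7.1.) -/
/-!
Pushing `ν` and `μ` forward along `L` reduces everything to a `G`-valued measure `ν` on `ℝ`
dominated by a finite measure `μ` without atoms. There the increment `γ b - γ a = ν (Ioc a b)`
is bounded by `F b - F a`, where `F t = μ (Iic t)`, so the length bound telescopes; continuity
at `x` follows because `μ (closedBall x r) → μ {x} = 0` as `r → 0`, and the limits at `±∞` are
continuity of `μ` along `Iic t`.
-/

open MeasureTheory Set Filter Topology Metric

namespace MeasureTheory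

theorem tendsto_measureReal_closedBall_dist {X : Type*} [MetricSpace X] [MeasurableSpace X]
    [OpensMeasurableSpace X] (μ : Measure X) [IsFiniteMeasure μ] [NullSingletonClass μ] (x : X) :
    Tendsto (fun y => μ.real (closedBall x (dist y x))) (𝓝 x) (𝓝 0) := by
  have hdist : Tendsto (fun y => dist y x) (𝓝 x) (𝓝 0) :=
    tendsto_iff_dist_tendsto_zero.1 tendsto_id
  have hball := (tendsto_measure_cthickening_of_isClosed (μ := μ)
    ⟨1, one_pos, measure_ne_top μ _⟩ (isClosed_singleton (x := x))).comp hdist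
  rw [measure_singleton] at hball
  simpa [Function.comp_def, cthickening_singleton _ dist_nonneg, measureReal_def] using
    (ENNReal.tendsto_toReal ENNReal.zero_ne_top).comp hball

namespace VectorMeasure

variable {X G : Type*} [MeasurableSpace X] [NormedAddCommGroup G]

theorem norm_sub_le_measureReal_sdiff {ν : VectorMeasure X G} {μ : Measure X}
    (hdom : ∀ B, MeasurableSet B → ‖ν B‖ ≤ μ.real B) {A B : Set X}
    (hA : MeasurableSet A) (hB : MeasurableSet B) (hAB : A ⊆ B) :
    ‖ν B - ν A‖ ≤ μ.real (B \ A) := by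
  rw [← of_sdiff hA hB hAB]
  exact hdom _ (hB.diff hA)

theorem norm_sub_le_measureReal_sub {ν : VectorMeasure X G} {μ : Measure X} [IsFiniteMeasure μ]
    (hdom : ∀ B, MeasurableSet B → ‖ν B‖ ≤ μ.real B) {A B : Set X}
    (hA : MeasurableSet A) (hB : MeasurableSet B) (hAB : A ⊆ B) :
    ‖ν B - ν A‖ ≤ μ.real B - μ.real A :=
  measureReal_sdiff hAB hA (measure_ne_top μ B) ▸ norm_sub_le_measureReal_sdiff hdom hA hB hAB

theorem norm_map_le_measureReal_map {Y : Type*} [MeasurableSpace Y] {ν : VectorMeasure X G}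
    {μ : Measure X} (hdom : ∀ B, MeasurableSet B → ‖ν B‖ ≤ μ.real B) {f : X → Y}
    (hf : Measurable f) (B : Set Y) (hB : MeasurableSet B) :
    ‖ν.map f B‖ ≤ (μ.map f).real B := by
  rw [map_apply ν hf hB, measureReal_def, Measure.map_apply hf hB]
  exact hdom _ (hf hB)

section Real

variable {ν : VectorMeasure ℝ G} {μ : Measure ℝ}

theorem norm_apply_Iic_sub_le_measureReal_Ioc (hdom : ∀ B, MeasurableSet B → ‖ν B‖ ≤ μ.real B)
    {a b : ℝ} (hab : a ≤ b) : ‖ν (Iic b) - ν (Iic a)‖ ≤ μ.real (Ioc a b) := by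
  rw [← Iic_sdiff_Iic]
  exact norm_sub_le_measureReal_sdiff hdom measurableSet_Iic measurableSet_Iic
    (Iic_subset_Iic.2 hab)

theorem norm_apply_Iic_sub_le_measureReal_closedBall [IsFiniteMeasure μ]
    (hdom : ∀ B, MeasurableSet B → ‖ν B‖ ≤ μ.real B) (x y : ℝ) :
    ‖ν (Iic y) - ν (Iic x)‖ ≤ μ.real (closedBall x (dist y x)) := by
  rw [Real.closedBall_eq_Icc, Real.dist_eq]
  rcases le_total x y with hxy | hyx
  · refine (norm_apply_Iic_sub_le_measureReal_Ioc hdom hxy).trans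
      (measureReal_mono fun z hz => ?_)
    rw [abs_of_nonneg (sub_nonneg.2 hxy)]
    exact ⟨by linarith [hz.1], hz.2.trans (by linarith)⟩
  · rw [← norm_neg, neg_sub]
    refine (norm_apply_Iic_sub_le_measureReal_Ioc hdom hyx).trans
      (measureReal_mono fun z hz => ?_)
    rw [abs_of_nonpos (sub_nonpos.2 hyx)]
    exact ⟨by linarith [hz.1], hz.2.trans (by linarith)⟩

theorem continuous_apply_Iic [IsFiniteMeasure μ] [NullSingletonClass μ]
    (hdom : ∀ B, MeasurableSet B → ‖ν B‖ ≤ μ.real B) :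
    Continuous fun t => ν (Iic t) := by
  refine continuous_iff_continuousAt.2 fun x => tendsto_iff_norm_sub_tendsto_zero.2 ?_
  exact squeeze_zero (fun _ => norm_nonneg _) (norm_apply_Iic_sub_le_measureReal_closedBall hdom x)
    (tendsto_measureReal_closedBall_dist μ x)

theorem sum_norm_apply_Iic_sub_le [IsFiniteMeasure μ]
    (hdom : ∀ B, MeasurableSet B → ‖ν B‖ ≤ μ.real B) (m : ℕ) {t : ℕ → ℝ} (ht : Monotone t) :
    ∑ i ∈ Finset.range m, ‖ν (Iic (t (i + 1))) - ν (Iic (t i))‖ ≤ μ.real univ :=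
  calc ∑ i ∈ Finset.range m, ‖ν (Iic (t (i + 1))) - ν (Iic (t i))‖
      ≤ ∑ i ∈ Finset.range m, (μ.real (Iic (t (i + 1))) - μ.real (Iic (t i))) :=
        Finset.sum_le_sum fun i _ => norm_sub_le_measureReal_sub hdom measurableSet_Iic
          measurableSet_Iic (Iic_subset_Iic.2 (ht i.le_succ))
    _ = μ.real (Iic (t m)) - μ.real (Iic (t 0)) :=
        Finset.sum_range_sub (fun i => μ.real (Iic (t i))) m
    _ ≤ μ.real univ := by linarith [measureReal_mono (μ := μ) (subset_univ (Iic (t m))),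
        measureReal_nonneg (μ := μ) (s := Iic (t 0))]

theorem tendsto_apply_Iic_atBot [IsFiniteMeasure μ]
    (hdom : ∀ B, MeasurableSet B → ‖ν B‖ ≤ μ.real B) :
    Tendsto (fun t => ν (Iic t)) atBot (𝓝 0) := by
  have hμ : Tendsto (fun t => μ (Iic t)) atBot (𝓝 0) := by
    have h := tendsto_measure_iInter_atBot (μ := μ) (fun t => nullMeasurableSet_Iic)
      (fun _ _ => Iic_subset_Iic.2) ⟨0, measure_ne_top μ _⟩
    rwa [iInter_Iic_eq_empty_iff.2 (by simp), measure_empty] at h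
  refine tendsto_zero_iff_norm_tendsto_zero.2 (squeeze_zero (fun _ => norm_nonneg _)
    (fun t => hdom _ measurableSet_Iic) ?_)
  simpa [Function.comp_def, measureReal_def] using
    (ENNReal.tendsto_toReal ENNReal.zero_ne_top).comp hμ

theorem tendsto_apply_Iic_atTop [IsFiniteMeasure μ]
    (hdom : ∀ B, MeasurableSet B → ‖ν B‖ ≤ μ.real B) :
    Tendsto (fun t => ν (Iic t)) atTop (𝓝 (ν univ)) := by
  have hμ : Tendsto (fun t => μ.real univ - μ.real (Iic t)) atTop (𝓝 0) := by
    simpa [Function.comp_def, measureReal_def] using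
      ((ENNReal.tendsto_toReal (measure_ne_top μ univ)).comp
        (tendsto_measure_Iic_atTop μ)).const_sub (μ.real univ)
  refine tendsto_iff_norm_sub_tendsto_zero.2 (squeeze_zero (fun _ => norm_nonneg _)
    (fun t => ?_) hμ)
  rw [← norm_neg, neg_sub]
  exact norm_sub_le_measureReal_sub hdom measurableSet_Iic .univ (subset_univ _)

end Real

end VectorMeasure

end MeasureTheory

theorem exists_apply_ne_of_tendsto_atBot_atTop {α X : Type*} [LinearOrder α] [Nonempty α]
    [TopologicalSpace X] [T2Space X] {g : α → X} {a b : X} (ha : Tendsto g atBot (𝓝 a))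
    (hb : Tendsto g atTop (𝓝 b)) (hab : a ≠ b) : ∃ s t, g s ≠ g t := by
  by_contra! h
  obtain ⟨c⟩ := ‹Nonempty α›
  exact hab <| (tendsto_nhds_unique (ha.congr fun s => h s c) tendsto_const_nhds).trans
    (tendsto_nhds_unique tendsto_const_nhds (hb.congr fun s => h s c))

theorem path_construction_from_vectorMeasure_general
    {G : Type*} [NormedAddCommGroup G] (N : ℕ)
    (ν : VectorMeasure (EuclideanSpace ℝ (Fin N)) G)
    (μ : Measure (EuclideanSpace ℝ (Fin N))) [IsFiniteMeasure μ]
    (hdom : ∀ B : Set (EuclideanSpace ℝ (Fin N)), MeasurableSet B → ‖ν B‖ ≤ (μ B).toReal)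
    (L : EuclideanSpace ℝ (Fin N) →ₗ[ℝ] ℝ)
    (hL : ∀ s : ℝ, μ (L ⁻¹' {s}) = 0)
    (γ : ℝ → G) (hγ : ∀ t : ℝ, γ t = ν (L ⁻¹' Iic t)) :
    Continuous γ ∧
    (∀ (m : ℕ) (t : ℕ → ℝ), Monotone t →
      ∑ i ∈ Finset.range m, ‖γ (t (i + 1)) - γ (t i)‖ ≤ (μ univ).toReal) ∧
    Filter.Tendsto γ Filter.atBot (nhds 0) ∧
    Filter.Tendsto γ Filter.atTop (nhds (ν univ)) ∧
    (ν univ ≠ 0 → ∃ s t : ℝ, γ s ≠ γ t) := by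
  have hLm : Measurable L := L.continuous_of_finiteDimensional.measurable
  have hdomL := VectorMeasure.norm_map_le_measureReal_map hdom hLm
  have : NullSingletonClass (μ.map L) :=
    ⟨fun s => by rw [Measure.map_apply hLm (measurableSet_singleton s), hL s]⟩
  have hγL : γ = fun t => ν.map L (Iic t) :=
    funext fun t => by rw [hγ, VectorMeasure.map_apply _ hLm measurableSet_Iic]
  have hνL : ν.map L univ = ν univ := by rw [VectorMeasure.map_apply _ hLm .univ, preimage_univ]
  have hμL : (μ.map L).real univ = (μ univ).toReal := by
    rw [measureReal_def, Measure.map_apply hLm .univ, preimage_univ]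
  have hbot := VectorMeasure.tendsto_apply_Iic_atBot hdomL
  have htop := hνL ▸ VectorMeasure.tendsto_apply_Iic_atTop hdomL
  subst hγL
  exact ⟨VectorMeasure.continuous_apply_Iic hdomL,
    fun m t ht => hμL ▸ VectorMeasure.sum_norm_apply_Iic_sub_le hdomL m ht, hbot, htop,
    fun hne => exists_apply_ne_of_tendsto_atBot_atTop hbot htop hne.symm⟩

/-- The path construction in the proof of (2) ⟹ (1) of Theorem 7.1: if `ν` is a
`G`-valued Borel measure dominated by a finite Borel measure `μ` that gives no mass
to the level sets of a linear map `L : ℝ^N → ℝ`, then `γ(t) = ν(L⁻¹(-∞, t])` is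
continuous, has length at most `μ(ℝ^N)`, tends to `0` at `-∞` and to `ν(ℝ^N)` at `+∞`;
in particular if `ν(ℝ^N) ≠ 0` then `γ` is a nonconstant continuous path of finite
length in `G`. -/
theorem path_construction_from_vectorMeasure
    {G : Type*} [NormedAddCommGroup G] [CompleteSpace G] (N : ℕ)
    (ν : VectorMeasure (EuclideanSpace ℝ (Fin N)) G)
    (μ : Measure (EuclideanSpace ℝ (Fin N))) [IsFiniteMeasure μ]
    (hdom : ∀ B : Set (EuclideanSpace ℝ (Fin N)), MeasurableSet B → ‖ν B‖ ≤ (μ B).toReal)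
    (L : EuclideanSpace ℝ (Fin N) →ₗ[ℝ] ℝ)
    (hL : ∀ s : ℝ, μ (L ⁻¹' {s}) = 0)
    (γ : ℝ → G) (hγ : ∀ t : ℝ, γ t = ν (L ⁻¹' Iic t)) :
    Continuous γ ∧
    (∀ (m : ℕ) (t : ℕ → ℝ), Monotone t →
      ∑ i ∈ Finset.range m, ‖γ (t (i + 1)) - γ (t i)‖ ≤ (μ univ).toReal) ∧
    Filter.Tendsto γ Filter.atBot (nhds 0) ∧
    Filter.Tendsto γ Filter.atTop (nhds (ν univ)) ∧
    (ν univ ≠ 0 → ∃ s t : ℝ, γ s ≠ γ t) :=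
  path_construction_from_vectorMeasure_general N ν μ hdom L hL γ hγ
end

section
/- Let G be a complete normed abelian group for which there exists ε > 0 with ‖g‖ ≥ ε for every g ≠ 0 (for example G = ℤ with the usual norm, or any finite normed group). Then for every N ≥ 1, every compactly supported G-valued Borel measure on ℝ^N with finite total variation is purely atomic. (This is the 0-dimensional case of the rectifiability theorem for flat chains over such coefficient groups, as noted in the introduction and following Theorem 7.1.) -/
open MeasureTheory Set

/-!
When nonzero values have norm at least `ε > 0`, countable additivity is very rigid. A summable
sequence of such values is eventually zero, so only finitely many points carry nonzero mass;
and along a decreasing sequence of sets of nonzero mass the masses converge to the mass of the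
intersection, which therefore has norm at least `ε` as well. Cover a set of nonzero mass by
countably many small balls: one of the pieces still has nonzero mass. Iterating with radii
tending to `0` yields a decreasing sequence whose intersection is a single point of nonzero
mass. Hence every Borel set of nonzero mass contains an atom, so the mass of the complement
of the (finite) set of atoms vanishes.
-/

open TopologicalSpace

namespace MeasureTheory.VectorMeasure

variable {X G : Type*} [MeasurableSpace X] [NormedAddCommGroup G] (ν : VectorMeasure X G)
  {ε : ℝ}

theorem nonempty_of_measure_ne_zero {A : Set X} (h : ν A ≠ 0) : A.Nonempty :=
  nonempty_iff_ne_empty.2 fun hA ↦ h (hA ▸ ν.empty)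

theorem exists_measure_ne_zero_of_hasSum {f : ℕ → Set X} {g : G}
    (hf : HasSum (fun n ↦ ν (f n)) g) (hg : g ≠ 0) : ∃ n, ν (f n) ≠ 0 := by
  by_contra! h
  exact hg (hf.unique (by simp [h]))

theorem exists_subset_measure_ne_zero_of_dist_lt [PseudoMetricSpace X]
    [SeparableSpace X] [OpensMeasurableSpace X] {A : Set X}
    (hA : MeasurableSet A) (hνA : ν A ≠ 0) {r : ℝ} (hr : 0 < r) :
    ∃ A' ⊆ A, MeasurableSet A' ∧ ν A' ≠ 0 ∧ ∀ x ∈ A', ∀ y ∈ A', dist x y < r := by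
  have : Nonempty X := (ν.nonempty_of_measure_ne_zero hνA).to_subtype.map Subtype.val
  set balls : ℕ → Set X := fun n ↦ Metric.ball (denseSeq X n) (r / 2)
  have hcover : ⋃ n, disjointed balls n = univ := by
    rw [iUnion_disjointed, eq_univ_iff_forall]
    intro x
    obtain ⟨n, hn⟩ := denseRange_denseSeq X |>.exists_dist_lt x (half_pos hr)
    exact mem_iUnion.2 ⟨n, hn⟩
  have hpieces : HasSum (fun n ↦ ν (A ∩ disjointed balls n)) (ν A) := by
    have := ν.m_iUnion (f := fun n ↦ A ∩ disjointed balls n)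
      (fun n ↦ hA.inter (.disjointed (fun _ ↦ measurableSet_ball) n))
      ((disjoint_disjointed balls).mono fun _ _ ↦ .mono inter_subset_right inter_subset_right)
    rwa [← inter_iUnion, hcover, inter_univ] at this
  obtain ⟨n, hn⟩ := ν.exists_measure_ne_zero_of_hasSum hpieces hνA
  refine ⟨_, inter_subset_left, hA.inter (.disjointed (fun _ ↦ measurableSet_ball) n), hn, ?_⟩
  intro x hx y hy
  have hx' := disjointed_subset balls n hx.2
  have hy' := disjointed_subset balls n hy.2
  calc dist x y ≤ dist x (denseSeq X n) + dist y (denseSeq X n) := dist_triangle_right _ _ _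
    _ < r / 2 + r / 2 := add_lt_add hx' hy'
    _ = r := add_halves r

theorem finite_setOf_measure_singleton_ne_zero [MeasurableSingletonClass X]
    (hε : 0 < ε) (hG : ∀ g : G, g ≠ 0 → ε ≤ ‖g‖) : {x | ν {x} ≠ 0}.Finite := by
  by_contra hinf
  let e := Set.Infinite.natEmbedding _ hinf
  have hsum := ν.m_iUnion (f := fun n ↦ {(e n : X)}) (fun _ ↦ measurableSet_singleton _)
    fun i j hij ↦ disjoint_singleton.2 fun h ↦ hij (e.injective (Subtype.ext h))
  obtain ⟨n, hn⟩ := (Metric.tendsto_atTop.1 hsum.summable.tendsto_atTop_zero) ε hε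
  exact (hn n le_rfl).not_ge (dist_zero_right (ν {(e n : X)}) ▸ hG _ (e n).2)

theorem measure_iInter_ne_zero (hε : 0 < ε) (hG : ∀ g : G, g ≠ 0 → ε ≤ ‖g‖)
    {s : ℕ → Set X} (hanti : Antitone s) (hs : ∀ n, MeasurableSet (s n))
    (hνs : ∀ n, ν (s n) ≠ 0) : ν (⋂ n, s n) ≠ 0 := by
  have hlim := tendsto_vectorMeasure_iInter_atTop_nat hanti hs (v := ν)
  have : ε ≤ ‖ν (⋂ n, s n)‖ := ge_of_tendsto' hlim.norm fun n ↦ hG _ (hνs n)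
  exact norm_pos_iff.1 (hε.trans_le this)

theorem exists_mem_measure_singleton_ne_zero [MetricSpace X]
    [SeparableSpace X] [OpensMeasurableSpace X] (hε : 0 < ε) (hG : ∀ g : G, g ≠ 0 → ε ≤ ‖g‖)
    {A : Set X} (hA : MeasurableSet A) (hνA : ν A ≠ 0) : ∃ x ∈ A, ν {x} ≠ 0 := by
  choose! shrink hshrink_sub hshrink_meas hshrink_ne hshrink_dist using
    fun (n : ℕ) (B : Set X) (hB : MeasurableSet B) (hνB : ν B ≠ 0) ↦
      ν.exists_subset_measure_ne_zero_of_dist_lt hB hνB (Nat.one_div_pos_of_nat (n := n))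
  set s : ℕ → Set X := fun n ↦ Nat.rec A (fun n B ↦ shrink n B) n
  have hs : ∀ n, MeasurableSet (s n) ∧ ν (s n) ≠ 0 := by
    intro n
    induction n with
    | zero => exact ⟨hA, hνA⟩
    | succ n ih => exact ⟨hshrink_meas n _ ih.1 ih.2, hshrink_ne n _ ih.1 ih.2⟩
  have hanti : Antitone s := antitone_nat_of_succ_le fun n ↦ hshrink_sub n _ (hs n).1 (hs n).2
  have hνI := ν.measure_iInter_ne_zero hε hG hanti (fun n ↦ (hs n).1) (fun n ↦ (hs n).2)
  obtain ⟨x, hx⟩ := ν.nonempty_of_measure_ne_zero hνI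
  have hI : ⋂ n, s n = {x} := by
    refine eq_singleton_iff_unique_mem.2 ⟨hx, fun y hy ↦ eq_of_forall_dist_le fun δ hδ ↦ ?_⟩
    obtain ⟨n, hn⟩ := exists_nat_one_div_lt hδ
    have hdist := hshrink_dist n _ (hs n).1 (hs n).2 y (mem_iInter.1 hy (n + 1)) x
      (mem_iInter.1 hx (n + 1))
    exact (hdist.trans hn).le
  exact ⟨x, iInter_subset s 0 hx, hI ▸ hνI⟩

theorem purelyAtomic [MetricSpace X] [SeparableSpace X] [OpensMeasurableSpace X]
    (hε : 0 < ε) (hG : ∀ g : G, g ≠ 0 → ε ≤ ‖g‖) : PurelyAtomic ν := by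
  have hfin := ν.finite_setOf_measure_singleton_ne_zero hε hG
  refine ⟨_, hfin.countable, fun B hB ↦ ?_⟩
  by_contra hνB
  obtain ⟨x, hxB, hx⟩ :=
    ν.exists_mem_measure_singleton_ne_zero hε hG (hB.diff hfin.measurableSet) hνB
  exact hxB.2 hx

end MeasureTheory.VectorMeasure

theorem purelyAtomic_of_norm_bounded_below_general
    {G : Type*} [NormedAddCommGroup G]
    (ε : ℝ) (hε : 0 < ε) (hG : ∀ g : G, g ≠ 0 → ε ≤ ‖g‖) :
    ∀ N : ℕ, 1 ≤ N → ∀ ν : VectorMeasure (EuclideanSpace ℝ (Fin N)) G,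
      CompactlySupported ν → HasFiniteTotalVariation ν → PurelyAtomic ν :=
  fun _ _ ν _ _ ↦ ν.purelyAtomic hε hG

/-- The 0-dimensional rectifiability theorem for coefficient groups in which the norm
of nonzero elements is bounded away from `0` (e.g. `ℤ` or any finite normed group):
every compactly supported `G`-valued Borel measure on `ℝ^N` (`N ≥ 1`) of finite total
variation is purely atomic. -/
theorem purelyAtomic_of_norm_bounded_below
    {G : Type*} [NormedAddCommGroup G] [CompleteSpace G]
    (ε : ℝ) (hε : 0 < ε) (hG : ∀ g : G, g ≠ 0 → ε ≤ ‖g‖) :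
    ∀ N : ℕ, 1 ≤ N → ∀ ν : VectorMeasure (EuclideanSpace ℝ (Fin N)) G,
      CompactlySupported ν → HasFiniteTotalVariation ν → PurelyAtomic ν :=
  purelyAtomic_of_norm_bounded_below_general ε hε hG
end
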